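/- arXiv:2502.05571 — 2 statements merged into one kernel-verified Lean document; each statement's English description precedes it below -/
import Mathlib

section
/- Let g : ℝᴾ → ℝ be continuous on a compact set K ⊆ ℝᴾ. For every ε > 0 there exist m ∈ ℕ, weights aⱼ ∈ ℝ, ωⱼ ∈ ℝᴾ, bⱼ ∈ ℝ such that sup_{x∈K} |g(x) − Σ_{j=1}^m aⱼ·ReLU(ωⱼ·x + bⱼ)| < ε. -/
/-!
The exponential ridge functions `x ↦ exp (ℓ x)` restricted to `K` form a multiplicative monoid,
so their span is a subalgebra of `C(K, ℝ)`; it separates points because continuous linear forms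
do, hence it is dense by Stone–Weierstrass. Each `exp ∘ ℓ` is in turn a one-dimensional
continuous function of `ℓ x ∈ [a, b]`, and its piecewise linear interpolant on a fine grid is a
finite combination of ReLU ramps `max (s - tⱼ) 0 - max (s - tⱼ₊₁) 0`.
-/

open Set

section Ridge

variable {E : Type*} [AddCommGroup E] [Module ℝ E] [TopologicalSpace E]

def reluRidge (ℓ : StrongDual ℝ E) (b : ℝ) : C(E, ℝ) :=
  ⟨fun x => max (ℓ x + b) 0, by fun_prop⟩

@[simp]
lemma reluRidge_apply (ℓ : StrongDual ℝ E) (b : ℝ) (x : E) :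
    reluRidge ℓ b x = max (ℓ x + b) 0 :=
  rfl

variable (E) in
def reluNets : Submodule ℝ C(E, ℝ) :=
  Submodule.span ℝ (range fun p : StrongDual ℝ E × ℝ => reluRidge p.1 p.2)

lemma reluRidge_mem_reluNets (ℓ : StrongDual ℝ E) (b : ℝ) : reluRidge ℓ b ∈ reluNets E :=
  Submodule.subset_span ⟨(ℓ, b), rfl⟩

lemma const_mem_reluNets (c : ℝ) : ContinuousMap.const E c ∈ reluNets E := by
  have h : ContinuousMap.const E c = c • reluRidge 0 1 := by ext; simp
  rw [h]
  exact Submodule.smul_mem _ c (reluRidge_mem_reluNets 0 1)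

lemma comp_mem_reluNets {F : Type*} [AddCommGroup F] [Module ℝ F] [TopologicalSpace F]
    {φ : C(F, ℝ)} (hφ : φ ∈ reluNets F) (ℓ : E →L[ℝ] F) : φ.comp ℓ ∈ reluNets E := by
  have hle : (reluNets F).map (ContinuousMap.compRightAlgHom ℝ ℝ (ℓ : C(E, F))).toLinearMap
      ≤ reluNets E := by
    rw [reluNets, Submodule.map_span_le]
    rintro _ ⟨⟨ℓ', b⟩, rfl⟩
    exact reluRidge_mem_reluNets (ℓ'.comp ℓ) b
  exact hle ⟨φ, hφ, rfl⟩

lemma exists_eq_sum_of_mem_reluNets {φ : C(E, ℝ)} (hφ : φ ∈ reluNets E) :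
    ∃ (m : ℕ) (a : Fin m → ℝ) (ℓ : Fin m → StrongDual ℝ E) (b : Fin m → ℝ),
      ∀ x, φ x = ∑ j, a j * max (ℓ j x + b j) 0 := by
  obtain ⟨m, a, r, rfl⟩ := Submodule.mem_span_set'.mp hφ
  choose p hp using fun j => (r j).2
  refine ⟨m, a, fun j => (p j).1, fun j => (p j).2, fun x => ?_⟩
  simp [← hp]

end Ridge

section Interpolation

/-- The piecewise linear interpolant of `f` at the nodes `t 0 ≤ … ≤ t n`. -/
noncomputable def reluInterp (f : ℝ → ℝ) (t : ℕ → ℝ) : ℕ → C(ℝ, ℝ)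
  | 0 => .const ℝ (f (t 0))
  | n + 1 => reluInterp f t n + slope f (t n) (t (n + 1)) •
      (reluRidge (.id ℝ ℝ) (-t n) - reluRidge (.id ℝ ℝ) (-t (n + 1)))

variable {f : ℝ → ℝ} {t : ℕ → ℝ}

lemma reluInterp_mem_reluNets (n : ℕ) : reluInterp f t n ∈ reluNets ℝ := by
  induction n with
  | zero => exact const_mem_reluNets _
  | succ n ih =>
    exact add_mem ih (Submodule.smul_mem _ _
      (sub_mem (reluRidge_mem_reluNets _ _) (reluRidge_mem_reluNets _ _)))

lemma reluInterp_succ_apply (n : ℕ) (s : ℝ) :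
    reluInterp f t (n + 1) s = reluInterp f t n s +
      slope f (t n) (t (n + 1)) * (max (s - t n) 0 - max (s - t (n + 1)) 0) := by
  simp [reluInterp, sub_eq_add_neg, mul_add]

lemma reluInterp_apply_of_le (ht : Monotone t) {n : ℕ} {s : ℝ} (hs : t n ≤ s) :
    reluInterp f t n s = f (t n) := by
  induction n with
  | zero => rfl
  | succ n ih =>
    have hn : t n ≤ t (n + 1) := ht n.le_succ
    rw [reluInterp_succ_apply, ih (hn.trans hs), max_eq_left (by linarith),
      max_eq_left (by linarith), sub_sub_sub_cancel_left, mul_comm]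
    have := sub_smul_slope f (t n) (t (n + 1))
    simp only [smul_eq_mul, vsub_eq_sub] at this
    linarith

lemma abs_sub_add_slope_mul_le {a b s y ε : ℝ} (hs : s ∈ Icc a b) (ha : |y - f a| ≤ ε)
    (hb : |y - f b| ≤ ε) : |y - (f a + slope f a b * (s - a))| ≤ ε := by
  have hθ : (s - a) / (b - a) ∈ Icc (0 : ℝ) 1 :=
    ⟨div_nonneg (by linarith [hs.1]) (by linarith [hs.1, hs.2]),
      div_le_one_of_le₀ (by linarith [hs.2]) (by linarith [hs.1, hs.2])⟩
  have hmem := (convex_closedBall y ε).add_smul_sub_mem (x := f a) (y := f b)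
    (by rwa [Metric.mem_closedBall, Real.dist_eq, abs_sub_comm])
    (by rwa [Metric.mem_closedBall, Real.dist_eq, abs_sub_comm]) hθ
  rw [Metric.mem_closedBall, Real.dist_eq, abs_sub_comm, smul_eq_mul] at hmem
  convert hmem using 3
  rw [slope_def_field]
  ring

lemma abs_sub_reluInterp_le (ht : Monotone t) {n : ℕ} {ε : ℝ} (hε : 0 ≤ ε)
    (hf : ∀ j < n, ∀ s ∈ Icc (t j) (t (j + 1)),
      |f s - f (t j)| ≤ ε ∧ |f s - f (t (j + 1))| ≤ ε) :
    ∀ s ∈ Icc (t 0) (t n), |f s - reluInterp f t n s| ≤ ε := by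
  induction n with
  | zero =>
    intro s hs
    obtain rfl : s = t 0 := le_antisymm hs.2 hs.1
    simpa [reluInterp] using hε
  | succ n ih =>
    intro s hs
    have hn : t n ≤ t (n + 1) := ht n.le_succ
    rcases le_total s (t n) with hsn | hsn
    · rw [reluInterp_succ_apply, max_eq_right (by linarith), max_eq_right (by linarith),
        sub_zero, mul_zero, add_zero]
      exact ih (fun j hj => hf j (by omega)) s ⟨hs.1, hsn⟩
    · obtain ⟨h₁, h₂⟩ := hf n n.lt_succ_self s ⟨hsn, hs.2⟩
      rw [reluInterp_succ_apply, reluInterp_apply_of_le ht hsn, max_eq_left (by linarith),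
        max_eq_right (by linarith [hs.2]), sub_zero]
      exact abs_sub_add_slope_mul_le ⟨hsn, hs.2⟩ h₁ h₂

theorem exists_mem_reluNets_near {f : ℝ → ℝ} {a b : ℝ} (hf : ContinuousOn f (Icc a b))
    {ε : ℝ} (hε : 0 < ε) : ∃ φ ∈ reluNets ℝ, ∀ s ∈ Icc a b, |f s - φ s| ≤ ε := by
  rcases lt_or_ge b a with hba | hab
  · exact ⟨0, zero_mem _, by simp [Icc_eq_empty_of_lt hba]⟩
  obtain ⟨δ, hδ, hfδ⟩ :=
    Metric.uniformContinuousOn_iff_le.mp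
      (isCompact_Icc.uniformContinuousOn_of_continuous hf) ε hε
  obtain ⟨n, hn⟩ := exists_nat_gt ((b - a) / δ)
  have hn₀ : (0 : ℝ) < n := lt_of_le_of_lt (by positivity) hn
  set h := (b - a) / n
  have hh : h ≤ δ := by
    rw [div_lt_iff₀ hδ] at hn
    exact (div_le_iff₀ hn₀).mpr (by linarith)
  set t : ℕ → ℝ := fun j => a + j * h
  have ht : Monotone t := fun i j hij => by
    have : (i : ℝ) ≤ j := by exact_mod_cast hij
    simp only [t]; gcongr
  have ht₀ : t 0 = a := by simp [t]
  have htn : t n = b := by simp only [t, h]; field_simp; ring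
  refine ⟨reluInterp f t n, reluInterp_mem_reluNets n, ?_⟩
  rw [← ht₀, ← htn]
  refine abs_sub_reluInterp_le ht hε.le fun j hj s hs => ?_
  have hmem : ∀ i ≤ n, t i ∈ Icc a b := fun i hi => ⟨ht₀ ▸ ht (Nat.zero_le i), htn ▸ ht hi⟩
  have hsab : s ∈ Icc a b := ⟨(hmem j hj.le).1.trans hs.1, hs.2.trans (hmem (j + 1) hj).2⟩
  have hstep : t (j + 1) - t j = h := by simp only [t]; push_cast; ring
  constructor
  · rw [← Real.dist_eq]
    refine hfδ s hsab _ (hmem j hj.le) ?_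
    rw [Real.dist_eq, abs_of_nonneg (by linarith [hs.1])]
    linarith [hs.2]
  · rw [← Real.dist_eq]
    refine hfδ s hsab _ (hmem (j + 1) hj) ?_
    rw [Real.dist_eq, abs_of_nonpos (by linarith [hs.2])]
    linarith [hs.1]

end Interpolation

section StoneWeierstrass

variable {E : Type*} [AddCommGroup E] [Module ℝ E] [TopologicalSpace E] (K : Set E)

noncomputable def expRidge : Multiplicative (StrongDual ℝ E) →* C(K, ℝ) where
  toFun ℓ := ⟨fun x => Real.exp (ℓ.toAdd x), by fun_prop⟩
  map_one' := by ext; simp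
  map_mul' ℓ ℓ' := by ext; simp [Real.exp_add]

abbrev ContinuousMap.restrictₗ : C(E, ℝ) →ₗ[ℝ] C(K, ℝ) :=
  (compRightAlgHom ℝ ℝ ⟨Subtype.val, continuous_subtype_val⟩).toLinearMap

lemma separatesPoints_adjoin_expRidge [SeparatingDual ℝ E] :
    (Algebra.adjoin ℝ (MonoidHom.mrange (expRidge K) : Set C(K, ℝ))).SeparatesPoints := by
  intro x y hxy
  obtain ⟨ℓ, hℓ⟩ :=
    SeparatingDual.exists_separating_of_ne (R := ℝ) (Subtype.coe_injective.ne hxy)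
  exact ⟨_, ⟨_, Algebra.subset_adjoin ⟨.ofAdd ℓ, rfl⟩, rfl⟩,
    fun h => hℓ (Real.exp_injective h)⟩

variable [CompactSpace K]

lemma expRidge_mem_closure_reluNets (ℓ : StrongDual ℝ E) :
    expRidge K (.ofAdd ℓ) ∈
      closure ((reluNets E).map (ContinuousMap.restrictₗ K) : Set C(K, ℝ)) := by
  obtain ⟨a, b, hab⟩ : ∃ a b, ∀ x : K, ℓ x ∈ Icc a b :=
    ⟨_, _, fun x => (isCompact_range (f := fun x : K => ℓ x) (by fun_prop)).isBounded
      |>.subset_Icc_sInf_sSup ⟨x, rfl⟩⟩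
  refine Metric.mem_closure_iff.mpr fun ε hε => ?_
  obtain ⟨φ, hφ, hφε⟩ :=
    exists_mem_reluNets_near Real.continuous_exp.continuousOn (half_pos hε)
  refine ⟨_, ⟨φ.comp ℓ, comp_mem_reluNets hφ ℓ, rfl⟩, ?_⟩
  refine ((ContinuousMap.dist_le (half_pos hε).le).mpr fun x => ?_).trans_lt (half_lt_self hε)
  exact (hφε _ (hab x)).trans_eq' rfl

theorem dense_reluNets_restrict [SeparatingDual ℝ E] :
    Dense ((reluNets E).map (ContinuousMap.restrictₗ K) : Set C(K, ℝ)) := by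
  set N := (reluNets E).map (ContinuousMap.restrictₗ K)
  set A := Algebra.adjoin ℝ (MonoidHom.mrange (expRidge K) : Set C(K, ℝ))
  have hA : Subalgebra.toSubmodule A ≤ N.topologicalClosure := by
    rw [Algebra.adjoin_eq_span, Submonoid.closure_eq, Submodule.span_le]
    rintro _ ⟨ℓ, rfl⟩
    exact expRidge_mem_closure_reluNets K ℓ.toAdd
  have hA_dense : closure (A : Set C(K, ℝ)) = univ := by
    rw [← Subalgebra.topologicalClosure_coe,
      ContinuousMap.subalgebra_topologicalClosure_eq_top_of_separatesPoints A
        (separatesPoints_adjoin_expRidge K), Algebra.coe_top]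
  exact dense_iff_closure_eq.mpr
    (eq_univ_of_univ_subset (hA_dense ▸ closure_minimal hA isClosed_closure))

end StoneWeierstrass

/-- Universal approximation by shallow ReLU networks: every function `g`
continuous on a compact set `K ⊆ ℝᴾ` can be uniformly approximated within any
`ε > 0` by a finite sum `Σⱼ aⱼ ReLU(ωⱼ·x + bⱼ)`. -/
theorem stmt_18 {P : ℕ} (K : Set (Fin P → ℝ)) (hK : IsCompact K)
    (g : (Fin P → ℝ) → ℝ) (hg : ContinuousOn g K) :
    ∀ ε > (0 : ℝ), ∃ (m : ℕ) (a : Fin m → ℝ) (ω : Fin m → Fin P → ℝ) (b : Fin m → ℝ),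
      ∀ x ∈ K, |g x - ∑ j, a j * max (∑ i, ω j i * x i + b j) 0| < ε := by
  intro ε hε
  have : CompactSpace K := isCompact_iff_compactSpace.mp hK
  obtain ⟨_, ⟨φ, hφ, rfl⟩, hdist⟩ :=
    (dense_reluNets_restrict K).exists_dist_lt ⟨K.domRestrict g, hg.domRestrict⟩ hε
  obtain ⟨m, a, ℓ, b, hφ_eq⟩ := exists_eq_sum_of_mem_reluNets hφ
  refine ⟨m, a, fun j i => ℓ j (Pi.single i 1), b, fun x hx => ?_⟩
  have hℓ : ∀ j, ℓ j x = ∑ i, ℓ j (Pi.single i 1) * x i := fun j => by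
    conv_lhs => rw [pi_eq_sum_univ' x]
    simp [mul_comm]
  simp_rw [← hℓ, ← hφ_eq, ← Real.dist_eq]
  exact (ContinuousMap.dist_apply_le_dist ⟨x, hx⟩).trans_lt hdist
end

section
/- Let A = τ(I + τΛ)⁻¹ where Λ = diag(λ₁,…,λₚ), 0 ≤ λ₁ ≤ … ≤ λₚ, τ > 0. Then A is symmetric positive definite with eigenvalues in [τ(1+τλₚ)⁻¹, τ(1+τλ₁)⁻¹], and for every e ∈ ℝᴾ: eᵀ(I + A)²e ≥ (1 + 2τ(1+τλₚ)⁻¹/(1 + τ²(1+τλ₁)⁻²))·eᵀ(I + A²)e. -/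
open Matrix

/-- For `A = τ(I + τΛ)⁻¹` with `Λ = diag(λ₀ ≤ … ≤ λₙ)`, `λ₀ ≥ 0`, `τ > 0`:
`A` is symmetric positive definite, its spectrum lies in
`[τ(1+τλₙ)⁻¹, τ(1+τλ₀)⁻¹]`, and for every `e`,
`eᵀ(I+A)²e ≥ (1 + 2τ(1+τλₙ)⁻¹/(1+τ²(1+τλ₀)⁻²)) eᵀ(I+A²)e`. -/
theorem stmt_19 {n : ℕ} (l : Fin (n + 1) → ℝ) (hmono : Monotone l) (h0 : 0 ≤ l 0)
    (τ : ℝ) (hτ : 0 < τ) :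
    (τ • ((1 : Matrix (Fin (n + 1)) (Fin (n + 1)) ℝ) + τ • Matrix.diagonal l)⁻¹).PosDef ∧
    spectrum ℝ (τ • ((1 : Matrix (Fin (n + 1)) (Fin (n + 1)) ℝ) + τ • Matrix.diagonal l)⁻¹)
      ⊆ Set.Icc (τ * (1 + τ * l (Fin.last n))⁻¹) (τ * (1 + τ * l 0)⁻¹) ∧
    ∀ e : Fin (n + 1) → ℝ,
      e ⬝ᵥ (((1 + τ • ((1 : Matrix (Fin (n + 1)) (Fin (n + 1)) ℝ)
            + τ • Matrix.diagonal l)⁻¹) ^ 2).mulVec e) ≥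
        (1 + 2 * (τ * (1 + τ * l (Fin.last n))⁻¹) / (1 + τ ^ 2 * (1 + τ * l 0)⁻¹ ^ 2)) *
          (e ⬝ᵥ ((1 + (τ • ((1 : Matrix (Fin (n + 1)) (Fin (n + 1)) ℝ)
            + τ • Matrix.diagonal l)⁻¹) ^ 2).mulVec e)) := by
  have hl : ∀ i, 0 ≤ l i := fun i => h0.trans (hmono (Fin.zero_le i))
  have hf : ∀ i, 0 < 1 + τ * l i := fun i => by
    have := hl i; positivity
  set d : Fin (n + 1) → ℝ := fun i => τ * (1 + τ * l i)⁻¹ with hd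
  have hdpos : ∀ i, 0 < d i := fun i => mul_pos hτ (inv_pos.mpr (hf i))
  have hM : τ • ((1 : Matrix (Fin (n + 1)) (Fin (n + 1)) ℝ) + τ • Matrix.diagonal l)⁻¹
      = Matrix.diagonal d := by
    have h1 : (1 : Matrix (Fin (n + 1)) (Fin (n + 1)) ℝ) + τ • Matrix.diagonal l
        = Matrix.diagonal (fun i => 1 + τ * l i) := by
      rw [← Matrix.diagonal_one, ← Matrix.diagonal_smul, ← Matrix.diagonal_add]
      rfl
    have hinv : (Matrix.diagonal fun i => 1 + τ * l i)⁻¹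
        = Matrix.diagonal fun i => (1 + τ * l i)⁻¹ := by
      apply Matrix.inv_eq_right_inv
      rw [Matrix.diagonal_mul_diagonal]
      have hone : (fun i => (1 + τ * l i) * (1 + τ * l i)⁻¹)
          = (fun _ : Fin (n + 1) => (1 : ℝ)) := by
        funext i; exact mul_inv_cancel₀ (hf i).ne'
      rw [hone]
      exact Matrix.diagonal_one
    rw [h1, hinv, ← Matrix.diagonal_smul]
    have hsd : τ • (fun i => (1 + τ * l i)⁻¹) = d := by
      funext i; simp [hd]
    rw [hsd]
  rw [hM]
  have hdlast : ∀ i, d (Fin.last n) ≤ d i := fun i => by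
    apply mul_le_mul_of_nonneg_left _ hτ.le
    exact inv_anti₀ (hf i) (by nlinarith [hmono (Fin.le_last i)])
  have hd0 : ∀ i, d i ≤ d 0 := fun i => by
    apply mul_le_mul_of_nonneg_left _ hτ.le
    exact inv_anti₀ (hf 0) (by nlinarith [hmono (Fin.zero_le i)])
  refine ⟨Matrix.PosDef.diagonal hdpos, ?_, ?_⟩
  · rw [spectrum_diagonal]
    rintro x ⟨i, rfl⟩
    exact ⟨hdlast i, hd0 i⟩
  · intro e
    have hA : (1 + Matrix.diagonal d) = Matrix.diagonal (fun i => 1 + d i) := by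
      rw [← Matrix.diagonal_one, ← Matrix.diagonal_add]
    have hA2 : (1 + Matrix.diagonal d ^ 2) = Matrix.diagonal (fun i => 1 + d i ^ 2) := by
      rw [Matrix.diagonal_pow, ← Matrix.diagonal_one, ← Matrix.diagonal_add]
      rfl
    rw [hA, hA2, Matrix.diagonal_pow]
    have hexp : (1 + 2 * (τ * (1 + τ * l (Fin.last n))⁻¹) / (1 + τ ^ 2 * (1 + τ * l 0)⁻¹ ^ 2))
        = 1 + 2 * d (Fin.last n) / (1 + d 0 ^ 2) := by
      rw [hd]; ring
    rw [hexp]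
    simp only [dotProduct, Matrix.mulVec_diagonal, Finset.mul_sum, ge_iff_le, Pi.pow_apply]
    apply Finset.sum_le_sum
    intro i _
    have hi := hdpos i
    have h0p := hdpos 0
    have hlp := hdpos (Fin.last n)
    have h1 : d (Fin.last n) ≤ d i := hdlast i
    have h2 : d i ≤ d 0 := hd0 i
    have hc : 2 * d (Fin.last n) / (1 + d 0 ^ 2) * (1 + d i ^ 2) ≤ 2 * d i := by
      rw [div_mul_eq_mul_div, div_le_iff₀ (by positivity)]
      nlinarith [mul_nonneg (sub_nonneg.2 h1) (by positivity : (0:ℝ) ≤ 1 + d i ^ 2),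
        mul_nonneg hi.le (mul_nonneg (sub_nonneg.2 h2) (by positivity : (0:ℝ) ≤ d 0 + d i))]
    nlinarith [mul_nonneg (mul_self_nonneg (e i)) (sub_nonneg.mpr hc)]
end
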